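/- arXiv:2505.03408 — 10 statements merged into one kernel-verified Lean document; each statement's English description precedes it below -/
import Mathlib

section
/- Fix r_0 = 1. For positive reals r_1 ≤ r_2 and x, y ∈ {1,2}, the dihedral angle T(x,y) between the plane through the centers of the pit, head (radius r_1), and a bead of radius r_x, and the plane through the centers of the pit, head, and a bead of radius r_y—where all four spheres are mutually tangent—satisfies T(x,y) > π/3. -/
/-!
Put `a = r₁` and `p = r_x`, `q = r_y`. The centres of the pit and of two tangent spheres of
radii `a`, `b` form a triangle with sides `1 + a`, `1 + b`, `a + b` and semiperimeter `1 + a + b`,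
so by Heron's formula the sine of its angle at the pit's centre is
`2 √(a b (1 + a + b)) / ((1 + a) (1 + b))`. Substituting into the spherical law of cosines gives
`cos T = N / (2 √(A B))`, where `N = a (1 + a) (p + q) - p q (1 + a²)`,
`A = a p (1 + a + q)` and `B = a q (1 + a + p)`. When `a ≤ p` and `a ≤ q`, `N` is strictly below
both `A` and `B`, hence below their geometric mean, so `cos T < 1/2 = cos (π/3)`.
-/

open Real Set

/-- The paper's `cos M(a, b)`: the angle at the pit's centre between the centres of two spheres
of radii `a` and `b` tangent to each other and to the pit. -/
noncomputable def pitAngleCos (a b : ℝ) : ℝ :=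
  ((1 + a) ^ 2 + (1 + b) ^ 2 - (a + b) ^ 2) / (2 * (1 + a) * (1 + b))

theorem sin_eq_of_cos_eq_pitAngleCos {a b M : ℝ} (ha : 0 ≤ a) (hb : 0 ≤ b)
    (hM : M ∈ Icc 0 π) (hcos : cos M = pitAngleCos a b) :
    sin M = 2 * √(a * b * (1 + a + b)) / ((1 + a) * (1 + b)) := by
  have hsin : 0 ≤ sin M := sin_nonneg_of_nonneg_of_le_pi hM.1 hM.2
  refine (pow_left_inj₀ hsin (by positivity) two_ne_zero).mp ?_
  have ha' : 1 + a ≠ 0 := by positivity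
  have hb' : 1 + b ≠ 0 := by positivity
  rw [sin_sq, hcos, div_pow, mul_pow, sq_sqrt (by positivity), pitAngleCos]
  field_simp
  ring

theorem pitAngleCos_sub_mul {a p q : ℝ} (ha : 1 + a ≠ 0) (hp : 1 + p ≠ 0) (hq : 1 + q ≠ 0) :
    pitAngleCos p q - pitAngleCos a p * pitAngleCos a q =
      2 * (a * (1 + a) * (p + q) - p * q * (1 + a ^ 2)) / ((1 + a) ^ 2 * (1 + p) * (1 + q)) := by
  unfold pitAngleCos
  field_simp
  ring

theorem lt_sqrt_mul_of_lt_of_lt {x A B : ℝ} (hA : x < A) (hB : x < B) : x < √(A * B) := by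
  rcases lt_or_ge x 0 with hx | hx
  · exact hx.trans_le (sqrt_nonneg _)
  · exact lt_sqrt_of_sq_lt (by nlinarith)

theorem dihedral_numerator_lt {a p q : ℝ} (ha : 0 < a) (hp : a ≤ p) (hq : 0 < q) :
    a * (1 + a) * (p + q) - p * q * (1 + a ^ 2) < a * p * (1 + a + q) := by
  -- the difference of the two sides is `q * (a + a ^ 2 - p * (1 + a + a ^ 2))`
  have hneg : a + a ^ 2 - p * (1 + a + a ^ 2) < 0 := by nlinarith [pow_pos ha 3]
  nlinarith [mul_neg_of_pos_of_neg hq hneg]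

theorem dihedralCos_lt_half {a p q Mpq Map Maq : ℝ} (ha : 0 < a) (hp : a ≤ p) (hq : a ≤ q)
    (hMap : Map ∈ Icc 0 π) (hMaq : Maq ∈ Icc 0 π) (hcMpq : cos Mpq = pitAngleCos p q)
    (hcMap : cos Map = pitAngleCos a p) (hcMaq : cos Maq = pitAngleCos a q) :
    (cos Mpq - cos Map * cos Maq) / (sin Map * sin Maq) < 1 / 2 := by
  have hp0 : 0 < p := ha.trans_le hp
  have hq0 : 0 < q := ha.trans_le hq
  set N := a * (1 + a) * (p + q) - p * q * (1 + a ^ 2)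
  set D := (1 + a) ^ 2 * (1 + p) * (1 + q) with hD_def
  have hD : 0 < D := by positivity
  have hnum : cos Mpq - cos Map * cos Maq = 2 * N / D := by
    rw [hcMpq, hcMap, hcMaq]
    exact pitAngleCos_sub_mul (by positivity) (by positivity) (by positivity)
  have hden : sin Map * sin Maq = 4 * √(a * p * (1 + a + q) * (a * q * (1 + a + p))) / D := by
    have hprod : a * p * (1 + a + q) * (a * q * (1 + a + p)) =
        a * p * (1 + a + p) * (a * q * (1 + a + q)) := by ring
    rw [sin_eq_of_cos_eq_pitAngleCos ha.le hp0.le hMap hcMap,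
      sin_eq_of_cos_eq_pitAngleCos ha.le hq0.le hMaq hcMaq, hprod,
      sqrt_mul (show 0 ≤ a * p * (1 + a + p) by positivity) (a * q * (1 + a + q)),
      div_mul_div_comm, hD_def]
    ring
  have hN : N < √(a * p * (1 + a + q) * (a * q * (1 + a + p))) :=
    lt_sqrt_mul_of_lt_of_lt (dihedral_numerator_lt ha hp hq0)
      (by linarith [dihedral_numerator_lt ha hq hp0])
  rw [hnum, hden, div_div_div_cancel_right₀ hD.ne', div_lt_iff₀ (by positivity)]
  linarith

theorem stmt_2_general (r₁ r₂ rx ry : ℝ) (h₁ : 0 < r₁) (h₁₂ : r₁ ≤ r₂)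
    (hx : rx = r₁ ∨ rx = r₂) (hy : ry = r₁ ∨ ry = r₂)
    (Mxy M1x M1y T : ℝ)
    (hM1x : M1x ∈ Set.Ioo 0 π) (hM1y : M1y ∈ Set.Ioo 0 π)
    (hcMxy : Real.cos Mxy =
      ((1 + rx)^2 + (1 + ry)^2 - (rx + ry)^2) / (2 * (1 + rx) * (1 + ry)))
    (hcM1x : Real.cos M1x =
      ((1 + r₁)^2 + (1 + rx)^2 - (r₁ + rx)^2) / (2 * (1 + r₁) * (1 + rx)))
    (hcM1y : Real.cos M1y =
      ((1 + r₁)^2 + (1 + ry)^2 - (r₁ + ry)^2) / (2 * (1 + r₁) * (1 + ry)))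
    (hT : T ∈ Set.Ioo 0 π)
    (hcT : Real.cos T =
      (Real.cos Mxy - Real.cos M1x * Real.cos M1y) / (Real.sin M1x * Real.sin M1y)) :
    π / 3 < T := by
  have hrx : r₁ ≤ rx := by rcases hx with rfl | rfl <;> linarith
  have hry : r₁ ≤ ry := by rcases hy with rfl | rfl <;> linarith
  have hcos : cos T < 1 / 2 := hcT ▸ dihedralCos_lt_half h₁ hrx hry
    (Ioo_subset_Icc_self hM1x) (Ioo_subset_Icc_self hM1y) hcMxy hcM1x hcM1y
  by_contra! hle
  have := cos_le_cos_of_nonneg_of_le_pi hT.1.le (by linarith [pi_pos]) hle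
  rw [cos_pi_div_three] at this
  linarith

theorem stmt_2 (r₁ r₂ rx ry : ℝ) (h₁ : 0 < r₁) (h₁₂ : r₁ ≤ r₂)
    (hx : rx = r₁ ∨ rx = r₂) (hy : ry = r₁ ∨ ry = r₂)
    (Mxy M1x M1y T : ℝ)
    (hMxy : Mxy ∈ Set.Ioo 0 π) (hM1x : M1x ∈ Set.Ioo 0 π) (hM1y : M1y ∈ Set.Ioo 0 π)
    (hcMxy : Real.cos Mxy =
      ((1 + rx)^2 + (1 + ry)^2 - (rx + ry)^2) / (2 * (1 + rx) * (1 + ry)))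
    (hcM1x : Real.cos M1x =
      ((1 + r₁)^2 + (1 + rx)^2 - (r₁ + rx)^2) / (2 * (1 + r₁) * (1 + rx)))
    (hcM1y : Real.cos M1y =
      ((1 + r₁)^2 + (1 + ry)^2 - (r₁ + ry)^2) / (2 * (1 + r₁) * (1 + ry)))
    (hT : T ∈ Set.Ioo 0 π)
    (hcT : Real.cos T =
      (Real.cos Mxy - Real.cos M1x * Real.cos M1y) / (Real.sin M1x * Real.sin M1y)) :
    π / 3 < T :=
  stmt_2_general r₁ r₂ rx ry h₁ h₁₂ hx hy Mxy M1x M1y T hM1x hM1y hcMxy hcM1x hcM1y hT hcT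
end

section
/- Let r₁ = 2 + √6 (the positive root of r² − 4r − 2). With pit radius 1 and three mutually tangent berries each of radius r₁ all tangent to the pit, the dihedral angle θ = T(1,1) (defined via the spherical law of cosines from the tangency angles) satisfies 3θ = 2π. -/
open Real

theorem stmt_4 (r₁ cM θ : ℝ)
    (hr : r₁ = 2 + Real.sqrt 6)
    (hcM : cM = ((1 + r₁)^2 + (1 + r₁)^2 - (2 * r₁)^2) / (2 * (1 + r₁)^2))
    (hθ : θ = Real.arccos (cM / (1 + cM))) :
    3 * θ = 2 * π := by
  have h6 : Real.sqrt 6 ^ 2 = 6 := Real.sq_sqrt (by norm_num)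
  have h6pos : (0:ℝ) < Real.sqrt 6 := Real.sqrt_pos.mpr (by norm_num)
  have hden : 2 * (1 + r₁)^2 ≠ 0 := by
    subst hr; positivity
  have hcM' : cM = -1/3 := by
    rw [hcM]
    rw [div_eq_iff hden]
    subst hr
    nlinarith [h6, h6pos]
  have : cM / (1 + cM) = -(1/2) := by rw [hcM']; norm_num
  rw [hθ, this, Real.arccos_neg]
  have h12 : Real.arccos (1/2) = π/3 := by
    rw [show (1:ℝ)/2 = Real.cos (π/3) by rw [Real.cos_pi_div_three]]
    exact Real.arccos_cos (by positivity) (by linarith [Real.pi_pos])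
  rw [h12]; ring
end

section
/- Let r₁ = 1 + √2 (the positive root of r² − 2r − 1). With pit radius 1 and berries of radius r₁, the dihedral angle θ with cos θ = cos M/(1 + cos M), where cos M = ((1+r₁)² + (1+r₁)² − (2r₁)²)/(2(1+r₁)²), satisfies 4θ = 2π, i.e., θ = π/2. -/
open Real

theorem stmt_5 (r₁ cM θ : ℝ)
    (hr : r₁ = 1 + Real.sqrt 2)
    (hcM : cM = ((1 + r₁)^2 + (1 + r₁)^2 - (2 * r₁)^2) / (2 * (1 + r₁)^2))
    (hθ : θ = Real.arccos (cM / (1 + cM))) :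
    4 * θ = 2 * π ∧ θ = π / 2 := by
  have h2 : Real.sqrt 2 ^ 2 = 2 := Real.sq_sqrt (by norm_num)
  have hcM0 : cM = 0 := by
    rw [hcM, hr, div_eq_zero_iff]
    left; ring_nf; nlinarith [h2]
  have hθ' : θ = π / 2 := by
    rw [hθ, hcM0]; norm_num [Real.arccos_zero]
  exact ⟨by rw [hθ']; ring, hθ'⟩
end

section
/- Let r₁ be the unique root in (1, 2) of the polynomial r⁴ − 6r³ + r² + 4r + 1. With pit radius 1 and berries of radius r₁, the dihedral angle θ given by cos θ = cos M/(1 + cos M), with cos M = ((1+r₁)² + (1+r₁)² − (2r₁)²)/(2(1+r₁)²), satisfies 5θ = 2π. -/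
open Real

theorem stmt_6 (r₁ cM θ : ℝ)
    (hr : r₁ ∈ Set.Ioo (1 : ℝ) 2)
    (hroot : r₁^4 - 6 * r₁^3 + r₁^2 + 4 * r₁ + 1 = 0)
    (hcM : cM = ((1 + r₁)^2 + (1 + r₁)^2 - (2 * r₁)^2) / (2 * (1 + r₁)^2))
    (hθ : θ = Real.arccos (cM / (1 + cM))) :
    5 * θ = 2 * π := by
  obtain ⟨hr1, hr2⟩ := hr
  have hpos : (0:ℝ) < 1 + r₁ := by linarith
  have hden : ((1 + r₁)^2 : ℝ) ≠ 0 := by positivity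
  have h2pos : (0:ℝ) < 2 + 4 * r₁ := by linarith
  have h2ne : (2 + 4 * r₁ : ℝ) ≠ 0 := ne_of_gt h2pos
  have h1ne : (1 + 2 * r₁ : ℝ) ≠ 0 := by nlinarith
  have hnum_pos : (0:ℝ) < 3 + 6 * r₁ - 2 * r₁^2 := by nlinarith
  have h5 : Real.sqrt 5 = (3 + 6 * r₁ - 2 * r₁^2) / (1 + 2 * r₁) := by
    rw [show (5:ℝ) = ((3 + 6 * r₁ - 2 * r₁^2) / (1 + 2 * r₁))^2 by
      field_simp; nlinarith [hroot]]
    exact Real.sqrt_sq (by positivity)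
  have hcM' : cM = (1 + 2 * r₁ - r₁^2) / (1 + r₁)^2 := by
    rw [hcM]; field_simp; ring
  have h1cM : 1 + cM = (2 + 4 * r₁) / (1 + r₁)^2 := by
    rw [hcM']; field_simp; ring
  have hkey : cM / (1 + cM) = (Real.sqrt 5 - 1) / 4 := by
    rw [show cM / (1 + cM) = (1 + 2 * r₁ - r₁^2) / (2 + 4 * r₁) by rw [h1cM, hcM']; field_simp, h5]
    field_simp
    ring
  have h5sq : Real.sqrt 5 ^ 2 = 5 := Real.sq_sqrt (by norm_num)
  have hc : Real.cos (2 * π / 5) = (Real.sqrt 5 - 1) / 4 := by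
    have h := Real.cos_two_mul (π / 5)
    rw [Real.cos_pi_div_five] at h
    rw [show 2 * π / 5 = 2 * (π / 5) by ring, h]
    nlinarith [h5sq]
  have hθ' : θ = 2 * π / 5 := by
    rw [hθ, hkey, ← hc]
    exact Real.arccos_cos (by positivity) (by nlinarith [Real.pi_pos])
  rw [hθ']; ring
end

section
/- Suppose 0 < r₁ < r₂ and the pair (r₁, r₂) satisfies the 01-necklace equation for code 0,1:2121, namely T(2,1) + T(1,2) + T(2,1) + T(1,2) = 2π. Then r₁ r₂ = r₁ + r₂ + 1, i.e., (r₁, r₂) lies on the variety of the polynomial −r₁r₂ + r₁ + r₂ + 1. -/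
open Real

theorem stmt_8 (r₁ r₂ : ℝ) (h₁ : 0 < r₁) (h₁₂ : r₁ < r₂)
    (M21 M12 M11 T : ℝ)
    (hM21 : M21 ∈ Set.Ioo 0 π) (hM12 : M12 ∈ Set.Ioo 0 π) (hM11 : M11 ∈ Set.Ioo 0 π)
    (hcM21 : Real.cos M21 =
      ((1 + r₂)^2 + (1 + r₁)^2 - (r₂ + r₁)^2) / (2 * (1 + r₂) * (1 + r₁)))
    (hcM12 : Real.cos M12 =
      ((1 + r₁)^2 + (1 + r₂)^2 - (r₁ + r₂)^2) / (2 * (1 + r₁) * (1 + r₂)))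
    (hcM11 : Real.cos M11 =
      ((1 + r₁)^2 + (1 + r₁)^2 - (r₁ + r₁)^2) / (2 * (1 + r₁) * (1 + r₁)))
    (hT : T ∈ Set.Ioo 0 π)
    (hcT : Real.cos T =
      (Real.cos M21 - Real.cos M12 * Real.cos M11) / (Real.sin M12 * Real.sin M11))
    (hsum : 4 * T = 2 * π) :
    r₁ * r₂ = r₁ + r₂ + 1 := by
  have hT2 : T = π / 2 := by linarith
  have hcT0 : Real.cos T = 0 := by rw [hT2]; exact Real.cos_pi_div_two
  have s12 : 0 < Real.sin M12 := Real.sin_pos_of_pos_of_lt_pi hM12.1 hM12.2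
  have s11 : 0 < Real.sin M11 := Real.sin_pos_of_pos_of_lt_pi hM11.1 hM11.2
  have hnum : Real.cos M21 - Real.cos M12 * Real.cos M11 = 0 := by
    rw [hcT0] at hcT
    have hd : Real.sin M12 * Real.sin M11 ≠ 0 := by positivity
    field_simp at hcT
    linarith
  have heq : Real.cos M21 = Real.cos M12 := by rw [hcM21, hcM12]; ring
  have h11lt : Real.cos M11 < 1 := by
    rw [hcM11, div_lt_one (by positivity)]
    nlinarith
  have h12 : Real.cos M12 = 0 := by
    have : Real.cos M12 * (1 - Real.cos M11) = 0 := by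
      rw [heq] at hnum; ring_nf; ring_nf at hnum; linarith
    rcases mul_eq_zero.1 this with h | h
    · exact h
    · linarith
  rw [hcM12, div_eq_zero_iff] at h12
  rcases h12 with h | h
  · nlinarith
  · nlinarith
end

section
/- Suppose 0 < r₁ < r₂, the pit has radius 1, and a head of radius r₁ is surrounded by three beads of radii r₂, r₁, r₁ (necklace code 0,1:211) with the three dihedral angles summing to 2π. Then −r₁r₂² + r₁r₂ − r₁ + 3r₂² + 3r₂ = 0. -/
/-!
By the symmetry of the dihedral-angle formula the two angles `T(2,1)` and `T(1,2)` are equal,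
so the closing condition reads `cos T(1,1) = cos (2 T(2,1)) = 2 cos² T(2,1) - 1`. Writing
`c = cos M(2,1)`, `d = cos M(1,1)` and eliminating the sines by `sin² = 1 - cos²`, this becomes
`(1 - d) (3c² - 2d - 1) = 0`, and `d ≠ 1` leaves `3c² = 2d + 1`. Clearing denominators in the
radii turns this into `-4 r₁ (-r₁r₂² + r₁r₂ - r₁ + 3r₂² + 3r₂) = 0`.
-/

open Real

/-- The cosine of the angle at the centre of the unit pit between two tangent beads of radii
`a` and `b` that touch the pit (law of cosines in the triangle of centres). -/
noncomputable def centralCos (a b : ℝ) : ℝ :=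
  ((1 + a) ^ 2 + (1 + b) ^ 2 - (a + b) ^ 2) / (2 * (1 + a) * (1 + b))

/-- Spherical law of cosines: the cosine of the angle opposite the side `γ` in a spherical
triangle with the other two sides `α` and `β`. -/
noncomputable def sphericalCos (α β γ : ℝ) : ℝ :=
  (cos γ - cos α * cos β) / (sin α * sin β)

theorem sphericalCos_comm (α β γ : ℝ) : sphericalCos α β γ = sphericalCos β α γ := by
  simp only [sphericalCos, mul_comm]

theorem centralCos_eq (a b : ℝ) :
    centralCos a b = (1 + a + b - a * b) / ((1 + a) * (1 + b)) := by
  rw [centralCos, mul_assoc, ← div_div]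
  congr 1
  ring

theorem three_cos_sq_eq_of_sphericalCos {α β : ℝ} (hα : sin α ≠ 0) (hβ : sin β ≠ 0)
    (h : sphericalCos β β β = 2 * sphericalCos α β α ^ 2 - 1) :
    3 * cos α ^ 2 = 2 * cos β + 1 := by
  have hsα : sin α ^ 2 = 1 - cos α ^ 2 := by rw [← sin_sq_add_cos_sq α]; ring
  have hsβ : sin β ^ 2 = 1 - cos β ^ 2 := by rw [← sin_sq_add_cos_sq β]; ring
  have hcβ : 1 - cos β ≠ 0 := by
    intro h1
    apply hβ
    nlinarith
  unfold sphericalCos at h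
  field_simp at h
  have hfac : (1 - cos β) * (3 * cos α ^ 2 - 2 * cos β - 1) = 0 := by
    linear_combination -h + (cos β * (1 - cos β) + sin β ^ 2) * hsα + (1 - cos α ^ 2) * hsβ
  linear_combination (mul_eq_zero.mp hfac).resolve_left hcβ

theorem eq_zero_of_three_centralCos_sq_eq {a b : ℝ} (ha : 0 < a) (hb : 1 + b ≠ 0)
    (h : 3 * centralCos b a ^ 2 = 2 * centralCos a a + 1) :
    -a * b ^ 2 + a * b - a + 3 * b ^ 2 + 3 * b = 0 := by
  have ha' : 1 + a ≠ 0 := by positivity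
  rw [centralCos_eq, centralCos_eq] at h
  field_simp at h
  have hprod : a * (-a * b ^ 2 + a * b - a + 3 * b ^ 2 + 3 * b) = 0 := by
    linear_combination (-1 / 4 : ℝ) * h
  exact (mul_eq_zero.mp hprod).resolve_left ha.ne'

theorem stmt_9_general (r₁ r₂ : ℝ) (h₁ : 0 < r₁) (h₁₂ : r₁ < r₂)
    (M21 M11 T21 T11 T12 : ℝ)
    (hM21 : M21 ∈ Set.Ioo 0 π) (hM11 : M11 ∈ Set.Ioo 0 π)
    (hcM21 : Real.cos M21 =
      ((1 + r₂)^2 + (1 + r₁)^2 - (r₂ + r₁)^2) / (2 * (1 + r₂) * (1 + r₁)))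
    (hcM11 : Real.cos M11 =
      ((1 + r₁)^2 + (1 + r₁)^2 - (r₁ + r₁)^2) / (2 * (1 + r₁) * (1 + r₁)))
    (hT21 : T21 ∈ Set.Ioo 0 π) (hT12 : T12 ∈ Set.Ioo 0 π)
    (hcT21 : Real.cos T21 =
      (Real.cos M21 - Real.cos M21 * Real.cos M11) / (Real.sin M21 * Real.sin M11))
    (hcT11 : Real.cos T11 =
      (Real.cos M11 - Real.cos M11 * Real.cos M11) / (Real.sin M11 * Real.sin M11))
    (hcT12 : Real.cos T12 =
      (Real.cos M21 - Real.cos M11 * Real.cos M21) / (Real.sin M11 * Real.sin M21))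
    (hsum : T21 + T11 + T12 = 2 * π) :
    -r₁ * r₂^2 + r₁ * r₂ - r₁ + 3 * r₂^2 + 3 * r₂ = 0 := by
  have hsin21 : sin M21 ≠ 0 := (sin_pos_of_pos_of_lt_pi hM21.1 hM21.2).ne'
  have hsin11 : sin M11 ≠ 0 := (sin_pos_of_pos_of_lt_pi hM11.1 hM11.2).ne'
  have hT : T21 = T12 := injOn_cos (Set.Ioo_subset_Icc_self hT21) (Set.Ioo_subset_Icc_self hT12)
    (by rw [hcT21, hcT12]; exact sphericalCos_comm M21 M11 M21)
  have hcos : cos T11 = 2 * cos T21 ^ 2 - 1 := by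
    rw [← cos_two_mul, ← cos_two_pi_sub, ← hsum, hT]
    ring_nf
  have hkey := three_cos_sq_eq_of_sphericalCos hsin21 hsin11 (by rwa [hcT11, hcT21] at hcos)
  rw [hcM21, hcM11] at hkey
  exact eq_zero_of_three_centralCos_sq_eq h₁ (by linarith) hkey

theorem stmt_9 (r₁ r₂ : ℝ) (h₁ : 0 < r₁) (h₁₂ : r₁ < r₂)
    (M21 M11 T21 T11 T12 : ℝ)
    (hM21 : M21 ∈ Set.Ioo 0 π) (hM11 : M11 ∈ Set.Ioo 0 π)
    (hcM21 : Real.cos M21 =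
      ((1 + r₂)^2 + (1 + r₁)^2 - (r₂ + r₁)^2) / (2 * (1 + r₂) * (1 + r₁)))
    (hcM11 : Real.cos M11 =
      ((1 + r₁)^2 + (1 + r₁)^2 - (r₁ + r₁)^2) / (2 * (1 + r₁) * (1 + r₁)))
    (hT21 : T21 ∈ Set.Ioo 0 π) (hT11 : T11 ∈ Set.Ioo 0 π) (hT12 : T12 ∈ Set.Ioo 0 π)
    (hcT21 : Real.cos T21 =
      (Real.cos M21 - Real.cos M21 * Real.cos M11) / (Real.sin M21 * Real.sin M11))
    (hcT11 : Real.cos T11 =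
      (Real.cos M11 - Real.cos M11 * Real.cos M11) / (Real.sin M11 * Real.sin M11))
    (hcT12 : Real.cos T12 =
      (Real.cos M21 - Real.cos M11 * Real.cos M21) / (Real.sin M11 * Real.sin M21))
    (hsum : T21 + T11 + T12 = 2 * π) :
    -r₁ * r₂^2 + r₁ * r₂ - r₁ + 3 * r₂^2 + 3 * r₂ = 0 :=
  stmt_9_general r₁ r₂ h₁ h₁₂ M21 M11 T21 T11 T12 hM21 hM11 hcM21 hcM11 hT21 hT12 hcT21 hcT11 hcT12
    hsum
end

section
/- Suppose 0 < r₁ < r₂, the pit has radius 1, and a head of radius r₁ is surrounded by three beads all of radius r₂ (necklace code 0,1:222) with the three equal dihedral angles summing to 2π (each equal to 2π/3). Then −r₁²r₂ + 3r₁² + r₁r₂ + 3r₁ − r₂ = 0. -/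
open Real

/-- `cos M(a,b)`: law of cosines in the triangle formed by the centre of the unit pit and two
touching beads of radii `a`, `b`. -/
noncomputable def pitCos (a b : ℝ) : ℝ :=
  ((1 + a) ^ 2 + (1 + b) ^ 2 - (a + b) ^ 2) / (2 * (1 + a) * (1 + b))

theorem two_mul_cos_add_one_eq_three_mul_cos_sq {x y : ℝ}
    (h : (cos y - cos x ^ 2) / sin x ^ 2 = -(1 / 2)) :
    2 * cos y + 1 = 3 * cos x ^ 2 := by
  -- with `x / 0 = 0` the hypothesis itself rules out `sin x = 0`
  have hsin : sin x ^ 2 ≠ 0 := by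
    rintro hzero
    rw [hzero, div_zero] at h
    norm_num at h
  rw [div_eq_iff hsin, sin_sq] at h
  linarith

theorem pit_poly_eq_zero_of_two_mul_pitCos_add_one {a b : ℝ} (ha : 1 + a ≠ 0) (hb : 0 < b)
    (h : 2 * pitCos b b + 1 = 3 * pitCos a b ^ 2) :
    -a ^ 2 * b + 3 * a ^ 2 + a * b + 3 * a - b = 0 := by
  have hb' : 1 + b ≠ 0 := by positivity
  unfold pitCos at h
  field_simp at h
  -- once denominators are cleared, `h` is `16 b` times the polynomial
  have hfactor : 16 * b * (-a ^ 2 * b + 3 * a ^ 2 + a * b + 3 * a - b) = 0 := by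
    linear_combination h
  have hne : 16 * b ≠ 0 := by positivity
  exact (mul_eq_zero.mp hfactor).resolve_left hne

theorem stmt_10_general (r₁ r₂ : ℝ) (h₁ : 0 < r₁) (h₁₂ : r₁ < r₂)
    (M22 M12 : ℝ)
    (hcM22 : Real.cos M22 =
      ((1 + r₂)^2 + (1 + r₂)^2 - (r₂ + r₂)^2) / (2 * (1 + r₂) * (1 + r₂)))
    (hcM12 : Real.cos M12 =
      ((1 + r₁)^2 + (1 + r₂)^2 - (r₁ + r₂)^2) / (2 * (1 + r₁) * (1 + r₂)))
    (hθ : (Real.cos M22 - (Real.cos M12)^2) / (Real.sin M12)^2 = -(1/2)) :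
    -r₁^2 * r₂ + 3 * r₁^2 + r₁ * r₂ + 3 * r₁ - r₂ = 0 := by
  have hcos := two_mul_cos_add_one_eq_three_mul_cos_sq hθ
  rw [hcM22, hcM12] at hcos
  exact pit_poly_eq_zero_of_two_mul_pitCos_add_one (by positivity) (h₁.trans h₁₂) hcos

theorem stmt_10 (r₁ r₂ : ℝ) (h₁ : 0 < r₁) (h₁₂ : r₁ < r₂)
    (M22 M12 : ℝ)
    (hM22 : M22 ∈ Set.Ioo 0 π) (hM12 : M12 ∈ Set.Ioo 0 π)
    (hcM22 : Real.cos M22 =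
      ((1 + r₂)^2 + (1 + r₂)^2 - (r₂ + r₂)^2) / (2 * (1 + r₂) * (1 + r₂)))
    (hcM12 : Real.cos M12 =
      ((1 + r₁)^2 + (1 + r₂)^2 - (r₁ + r₂)^2) / (2 * (1 + r₁) * (1 + r₂)))
    (hθ : (Real.cos M22 - (Real.cos M12)^2) / (Real.sin M12)^2 = -(1/2)) :
    -r₁^2 * r₂ + 3 * r₁^2 + r₁ * r₂ + 3 * r₁ - r₂ = 0 :=
  stmt_10_general r₁ r₂ h₁ h₁₂ M22 M12 hcM22 hcM12 hθ
end

section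
/- Suppose 0 < r₁ < r₂, the pit has radius 1, and a head of radius r₁ is surrounded by four beads all of radius r₂ (necklace code 0,1:2222) with the four equal dihedral angles each equal to π/2. Then −r₁²r₂ + 2r₁² + 2r₁ − r₂ = 0, i.e., r₂(r₁² + 1) = 2r₁² + 2r₁, i.e., r₂ = (2r₁² + 2r₁)/(r₁² + 1). -/
open Real

theorem stmt_11 (r₁ r₂ : ℝ) (h₁ : 0 < r₁) (h₁₂ : r₁ < r₂)
    (M22 M12 : ℝ)
    (hM22 : M22 ∈ Set.Ioo 0 π) (hM12 : M12 ∈ Set.Ioo 0 π)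
    (hcM22 : Real.cos M22 =
      ((1 + r₂)^2 + (1 + r₂)^2 - (r₂ + r₂)^2) / (2 * (1 + r₂) * (1 + r₂)))
    (hcM12 : Real.cos M12 =
      ((1 + r₁)^2 + (1 + r₂)^2 - (r₁ + r₂)^2) / (2 * (1 + r₁) * (1 + r₂)))
    (hθ : (Real.cos M22 - (Real.cos M12)^2) / (Real.sin M12)^2 = 0) :
    -r₁^2 * r₂ + 2 * r₁^2 + 2 * r₁ - r₂ = 0 ∧ r₂ = (2 * r₁^2 + 2 * r₁) / (r₁^2 + 1) := by
  have hs : Real.sin M12 ≠ 0 := ne_of_gt (Real.sin_pos_of_pos_of_lt_pi hM12.1 hM12.2)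
  have hnum : Real.cos M22 - (Real.cos M12)^2 = 0 := by
    have := (div_eq_zero_iff.mp hθ)
    rcases this with h | h
    · exact h
    · exact absurd h (pow_ne_zero 2 hs)
  rw [hcM22, hcM12] at hnum
  have h2 : 0 < r₂ := lt_trans h₁ h₁₂
  have ha : (1 + r₁) ≠ 0 := by positivity
  have hb : (1 + r₂) ≠ 0 := by positivity
  field_simp at hnum
  have h3 : 16 * r₂ * (1 + r₂)^2 * (-r₁^2 * r₂ + 2 * r₁^2 + 2 * r₁ - r₂) = 0 := by
    linear_combination 2 * (1 + r₂)^2 * hnum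
  have hc : 16 * r₂ * (1 + r₂)^2 ≠ 0 := by positivity
  have key : -r₁^2 * r₂ + 2 * r₁^2 + 2 * r₁ - r₂ = 0 := by
    rcases mul_eq_zero.mp h3 with h | h
    · exact absurd h hc
    · exact h
  refine ⟨key, ?_⟩
  have hd : r₁^2 + 1 ≠ 0 := by positivity
  field_simp
  linarith [key]
end

section
/- Suppose 0 < r₁ < r₂ satisfy r₁r₂ = r₁ + r₂ + 1 and additionally the 02-necklace constraint for code 0,2:11111 that five equal dihedral angles around a head of radius r₂ with five beads of radius r₁ sum to 2π. Then r₂ is a root of r⁴ − 6r³ + r² + 4r + 1 and r₁ is a root of r⁴ − 20r³ + 10r² + 20r + 5. -/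
open Real

theorem stmt_17 (r₁ r₂ : ℝ) (h₁ : 0 < r₁) (h₁₂ : r₁ < r₂)
    (h01 : r₁ * r₂ = r₁ + r₂ + 1)
    (M11 M21 θ : ℝ)
    (hM11 : M11 ∈ Set.Ioo 0 π) (hM21 : M21 ∈ Set.Ioo 0 π)
    (hcM11 : Real.cos M11 =
      ((1 + r₁)^2 + (1 + r₁)^2 - (r₁ + r₁)^2) / (2 * (1 + r₁) * (1 + r₁)))
    (hcM21 : Real.cos M21 =
      ((1 + r₂)^2 + (1 + r₁)^2 - (r₂ + r₁)^2) / (2 * (1 + r₂) * (1 + r₁)))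
    (hθ : θ ∈ Set.Ioo 0 π)
    (hcθ : Real.cos θ = (Real.cos M11 - (Real.cos M21)^2) / (Real.sin M21)^2)
    (hsum : 5 * θ = 2 * π) :
    r₂^4 - 6 * r₂^3 + r₂^2 + 4 * r₂ + 1 = 0 ∧
    r₁^4 - 20 * r₁^3 + 10 * r₁^2 + 20 * r₁ + 5 = 0 := by
  have h1pos : (0:ℝ) < 1 + r₁ := by linarith
  have h2pos : (0:ℝ) < 1 + r₂ := by linarith
  -- cos M21 = 0 using h01
  have hM21z : Real.cos M21 = 0 := by
    rw [hcM21]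
    have hnum : (1 + r₂)^2 + (1 + r₁)^2 - (r₂ + r₁)^2 = 0 := by nlinarith [h01]
    rw [hnum]; simp
  have hsin21 : (Real.sin M21)^2 = 1 := by
    have := Real.sin_sq_add_cos_sq M21
    rw [hM21z] at this; nlinarith
  -- cos θ = cos M11
  have hcθ' : Real.cos θ = 1 - 2 * r₁^2 / (1 + r₁)^2 := by
    rw [hcθ, hsin21, hM21z, hcM11]
    field_simp
    ring
  -- c := cos θ satisfies 4c^2 + 2c - 1 = 0 via cos 3θ = cos 2θ
  set c := Real.cos θ with hc
  have h3eq2 : Real.cos (3 * θ) = Real.cos (2 * θ) := by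
    have : 3 * θ = 2 * π - 2 * θ := by linarith
    rw [this, Real.cos_sub]
    simp [Real.cos_two_pi, Real.sin_two_pi]
  have hcube : 4 * c^3 - 3 * c = 2 * c^2 - 1 := by
    have h3 := Real.cos_three_mul θ
    have h2 := Real.cos_two_mul θ
    rw [h3, h2] at h3eq2
    linarith
  have hclt : c < 1 := by
    have : Real.cos θ < Real.cos 0 := by
      apply Real.cos_lt_cos_of_nonneg_of_le_pi le_rfl (le_of_lt hθ.2) hθ.1
    simpa using this
  have hquad : 4 * c^2 + 2 * c - 1 = 0 := by
    have hfac : (c - 1) * (4 * c^2 + 2 * c - 1) = 0 := by nlinarith [hcube]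
    rcases mul_eq_zero.mp hfac with h | h
    · exfalso; linarith
    · exact h
  -- polynomial for r₁
  have hP1 : r₁^4 - 20 * r₁^3 + 10 * r₁^2 + 20 * r₁ + 5 = 0 := by
    have hden : ((1 + r₁)^2 : ℝ) ≠ 0 := by positivity
    have hcd : c * (1 + r₁)^2 = (1 + r₁)^2 - 2 * r₁^2 := by
      rw [hcθ']; field_simp
    linear_combination ((1 + r₁)^2)^2 * hquad +
      (-4 * (c * (1 + r₁)^2) - 6 * (1 + r₁)^2 + 8 * r₁^2) * hcd
  refine ⟨?_, hP1⟩
  linear_combination ((r₂ - 1)^4 / 16) * hP1 +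
    ((-r₁^3*r₂^3 + 3*r₁^3*r₂^2 - 3*r₁^3*r₂ + r₁^3 + 19*r₁^2*r₂^3 - 59*r₁^2*r₂^2
      + 61*r₁^2*r₂ - 21*r₁^2 + 9*r₁*r₂^3 + 9*r₁*r₂^2 - 49*r₁*r₂ + 31*r₁
      - 11*r₂^3 + 87*r₂^2 - 73*r₂ - 11) / 16) * h01
end

section
/- The necklace polynomial equation r₁²r₂² − 2r₁²r₂ + r₁² − 2r₁r₂² − 4r₁r₂ + r₂² = 0 shared by codes 0,1:221 and 0,2:211 has infinitely many positive solutions; that is, the solution set {(r₁,r₂) : 0 < r₁ ≤ r₂, r₁²r₂² − 2r₁²r₂ + r₁² − 2r₁r₂² − 4r₁r₂ + r₂² = 0} is infinite. -/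
theorem stmt_18 :
    {p : ℝ × ℝ | 0 < p.1 ∧ p.1 ≤ p.2 ∧
      p.1^2 * p.2^2 - 2 * p.1^2 * p.2 + p.1^2 - 2 * p.1 * p.2^2 - 4 * p.1 * p.2 + p.2^2
        = 0}.Infinite := by
  set f : ℝ → ℝ × ℝ := fun x =>
    (x, x * ((x + 2) + Real.sqrt (3 * (2 * x + 1))) / (1 - x) ^ 2) with hf
  have hinj : Set.InjOn f (Set.Ioo (0:ℝ) 1) := by
    intro a _ b _ hab
    exact congrArg Prod.fst hab
  have hsub : f '' Set.Ioo (0:ℝ) 1 ⊆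
      {p : ℝ × ℝ | 0 < p.1 ∧ p.1 ≤ p.2 ∧
        p.1^2 * p.2^2 - 2 * p.1^2 * p.2 + p.1^2 - 2 * p.1 * p.2^2 - 4 * p.1 * p.2 + p.2^2
          = 0} := by
    rintro p ⟨x, ⟨hx0, hx1⟩, rfl⟩
    simp only [hf, Set.mem_setOf_eq]
    set s := Real.sqrt (3 * (2 * x + 1)) with hsdef
    have hs0 : 0 ≤ s := Real.sqrt_nonneg _
    have hsq : s ^ 2 = 3 * (2 * x + 1) := by
      rw [hsdef, Real.sq_sqrt]; nlinarith
    have hd1 : (1 - x) ≠ 0 := by intro h; nlinarith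
    have hd : (1 - x) ^ 2 ≠ 0 := pow_ne_zero 2 hd1
    have hdpos : (0:ℝ) < (1 - x) ^ 2 := (pow_ne_zero 2 hd1).symm.lt_of_le (by positivity)
    set r2 := x * ((x + 2) + s) / (1 - x) ^ 2 with hr2def
    have hr2 : r2 * (1 - x) ^ 2 = x * ((x + 2) + s) := by
      rw [hr2def, div_mul_cancel₀ _ hd]
    refine ⟨hx0, ?_, ?_⟩
    · rw [hr2def, le_div_iff₀ hdpos]
      nlinarith [hs0, hx0, hx1, mul_pos hx0 (show (0:ℝ) < 3 * x + 1 - x ^ 2 by nlinarith)]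
    · have key : ((1 - x) ^ 2) ^ 2 *
          (x^2 * r2^2 - 2 * x^2 * r2 + x^2 - 2 * x * r2^2 - 4 * x * r2 + r2^2) = 0 := by
        linear_combination
          (((1 - x) ^ 2 * (r2 * (1 - x) ^ 2 + x * ((x + 2) + s))
            - 2 * x * (x + 2) * (1 - x) ^ 2) * hr2 + (1 - x) ^ 2 * x ^ 2 * hsq)
      rcases mul_eq_zero.mp key with h | h
      · exact absurd h (pow_ne_zero 2 hd)
      · exact h
  exact ((Set.Ioo_infinite (by norm_num)).image hinj).mono hsub
end
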